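/- arXiv:1309.2350 — 4 statements merged into one kernel-verified Lean document; each statement's English description precedes it below -/
import Mathlib

section
/- Let m ≥ 1, let μ₀ ∈ ℝ^m lie in the probability simplex Δ_m with every entry strictly positive, and let z ∈ ℝ^m. Then the function F(x) = -⟨z, x⟩ + Σ_{j=1}^m x_j log(x_j / μ₀_j) attains a unique minimum over Δ_m, and its unique minimizer x* is given componentwise by x*_j = μ₀_j · exp(z_j) / (Σ_{j'=1}^m μ₀_{j'} · exp(z_{j'})). -/
/-!
Writing `x*` for the exponentially tilted distribution `μ₀ e^z / Z`, one has
`F x = KL(x ‖ x*) - log Z` on the simplex, so `F x - F x* = KL(x ‖ x*)`, which is positive for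
`x ≠ x*` by the strict Gibbs inequality.
-/

open Real Finset InformationTheory

lemma mul_klFun_div {a b : ℝ} (hb : b ≠ 0) :
    b * klFun (a / b) = a * log (a / b) - (a - b) := by
  unfold klFun
  field_simp
  ring

lemma sub_le_mul_log_div {a b : ℝ} (ha : 0 ≤ a) (hb : 0 < b) : a - b ≤ a * log (a / b) := by
  have := mul_nonneg hb.le (klFun_nonneg (div_nonneg ha hb.le))
  linarith [mul_klFun_div (a := a) hb.ne']

lemma sub_lt_mul_log_div {a b : ℝ} (ha : 0 ≤ a) (hb : 0 < b) (hab : a ≠ b) :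
    a - b < a * log (a / b) := by
  have hkl : klFun (a / b) ≠ 0 := by
    rwa [Ne, klFun_eq_zero_iff (div_nonneg ha hb.le), div_eq_one_iff_eq hb.ne']
  have := mul_pos hb ((klFun_nonneg (div_nonneg ha hb.le)).lt_of_ne' hkl)
  linarith [mul_klFun_div (a := a) hb.ne']

section Simplex

variable {ι : Type*} [Fintype ι]

theorem sum_mul_log_div_pos {x y : ι → ℝ} (hx : x ∈ stdSimplex ℝ ι) (hy : ∑ j, y j = 1)
    (hy_pos : ∀ j, 0 < y j) (hne : x ≠ y) : 0 < ∑ j, x j * log (x j / y j) := by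
  obtain ⟨j, hj⟩ := Function.ne_iff.mp hne
  calc (0 : ℝ) = ∑ j, (x j - y j) := by rw [sum_sub_distrib, hx.2, hy, sub_self]
    _ < ∑ j, x j * log (x j / y j) :=
      sum_lt_sum (fun i _ => sub_le_mul_log_div (hx.1 i) (hy_pos i))
        ⟨j, mem_univ j, sub_lt_mul_log_div (hx.1 j) (hy_pos j) hj⟩

noncomputable def gibbsTilt (μ z : ι → ℝ) (j : ι) : ℝ :=
  μ j * exp (z j) / ∑ i, μ i * exp (z i)

variable [Nonempty ι] {μ : ι → ℝ} (z : ι → ℝ)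

lemma sum_mul_exp_pos (hμ : ∀ j, 0 < μ j) : 0 < ∑ i, μ i * exp (z i) :=
  sum_pos (fun i _ => mul_pos (hμ i) (exp_pos _)) univ_nonempty

lemma gibbsTilt_pos (hμ : ∀ j, 0 < μ j) (j : ι) : 0 < gibbsTilt μ z j :=
  div_pos (mul_pos (hμ j) (exp_pos _)) (sum_mul_exp_pos z hμ)

lemma sum_gibbsTilt (hμ : ∀ j, 0 < μ j) : ∑ j, gibbsTilt μ z j = 1 := by
  simp only [gibbsTilt]
  rw [← sum_div, div_self (sum_mul_exp_pos z hμ).ne']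

lemma mul_log_div_gibbsTilt (hμ : ∀ j, 0 < μ j) (a : ℝ) (j : ι) :
    a * log (a / gibbsTilt μ z j) =
      -(z j * a) + a * log (a / μ j) + a * log (∑ i, μ i * exp (z i)) := by
  rcases eq_or_ne a 0 with rfl | ha
  · simp
  rw [log_div ha (gibbsTilt_pos z hμ j).ne', gibbsTilt,
    log_div (mul_pos (hμ j) (exp_pos _)).ne' (sum_mul_exp_pos z hμ).ne',
    log_mul (hμ j).ne' (exp_ne_zero _), log_exp, log_div ha (hμ j).ne']
  ring

lemma sum_mul_log_div_gibbsTilt (hμ : ∀ j, 0 < μ j) {x : ι → ℝ} (hx : ∑ j, x j = 1) :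
    ∑ j, x j * log (x j / gibbsTilt μ z j) =
      -(∑ j, z j * x j) + ∑ j, x j * log (x j / μ j) + log (∑ i, μ i * exp (z i)) := by
  simp only [mul_log_div_gibbsTilt z hμ, sum_add_distrib, sum_neg_distrib, ← sum_mul, hx, one_mul]

end Simplex

theorem bayes_dual_averaging_unique_minimizer_general
    (m : ℕ) (hm : 1 ≤ m) (μ0 z : Fin m → ℝ)
    (hμ0pos : ∀ j, 0 < μ0 j)
    (F : (Fin m → ℝ) → ℝ)
    (hF : ∀ x, F x = -(∑ j, z j * x j) + ∑ j, x j * Real.log (x j / μ0 j))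
    (xstar : Fin m → ℝ)
    (hxstar : ∀ j, xstar j =
      μ0 j * Real.exp (z j) / ∑ j', μ0 j' * Real.exp (z j')) :
    xstar ∈ stdSimplex ℝ (Fin m) ∧
      ∀ x ∈ stdSimplex ℝ (Fin m), x ≠ xstar → F xstar < F x := by
  have : Nonempty (Fin m) := ⟨⟨0, hm⟩⟩
  obtain rfl : xstar = gibbsTilt μ0 z := funext hxstar
  have hsum := sum_gibbsTilt z hμ0pos
  have hF_eq : ∀ x : Fin m → ℝ, ∑ j, x j = 1 →
      F x = ∑ j, x j * log (x j / gibbsTilt μ0 z j) - log (∑ i, μ0 i * exp (z i)) := by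
    intro x hx
    rw [hF, sum_mul_log_div_gibbsTilt z hμ0pos hx]
    ring
  refine ⟨⟨fun j => (gibbsTilt_pos z hμ0pos j).le, hsum⟩, fun x hx hne => ?_⟩
  have hF_star : F (gibbsTilt μ0 z) = -log (∑ i, μ0 i * exp (z i)) := by
    simp [hF_eq _ hsum, div_self (gibbsTilt_pos z hμ0pos _).ne']
  rw [hF_star, hF_eq x hx.2]
  linarith [sum_mul_log_div_pos hx hsum (gibbsTilt_pos z hμ0pos) hne]

/-- The function `F(x) = -⟨z, x⟩ + ∑ j, x j * log (x j / μ₀ j)` attains a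
unique minimum over the probability simplex `Δ_m`, and its unique minimizer is
`x*_j = μ₀_j exp(z_j) / ∑_{j'} μ₀_{j'} exp(z_{j'})`. -/
theorem bayes_dual_averaging_unique_minimizer
    (m : ℕ) (hm : 1 ≤ m) (μ0 z : Fin m → ℝ)
    (hμ0 : μ0 ∈ stdSimplex ℝ (Fin m)) (hμ0pos : ∀ j, 0 < μ0 j)
    (F : (Fin m → ℝ) → ℝ)
    (hF : ∀ x, F x = -(∑ j, z j * x j) + ∑ j, x j * Real.log (x j / μ0 j))
    (xstar : Fin m → ℝ)
    (hxstar : ∀ j, xstar j =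
      μ0 j * Real.exp (z j) / ∑ j', μ0 j' * Real.exp (z j')) :
    xstar ∈ stdSimplex ℝ (Fin m) ∧
      ∀ x ∈ stdSimplex ℝ (Fin m), x ≠ xstar → F xstar < F x :=
  bayes_dual_averaging_unique_minimizer_general m hm μ0 z hμ0pos F hF xstar hxstar
end

section
/- Let (Ω, F, P) be a probability space and n ≥ 1. Let Y_{k,τ} : Ω → ℝ, for k ∈ {1,…,n} and τ ∈ ℕ, be an independent family of square-integrable random variables such that, for each fixed k, the variables Y_{k,τ} (τ ∈ ℕ) are identically distributed with mean m_k and variance v_k < ∞. Let A_{t,τ} : Ω → (n×n real matrices), for integers 0 ≤ τ < t, be random matrices such that: (i) the σ-algebra generated by the whole family (A_{t,τ}) is independent of the σ-algebra generated by the family (Y_{k,τ}); (ii) almost surely every A_{t,τ} is doubly stochastic; and (iii) almost surely, for every ε > 0 there exists N such that |(A_{t,τ})_{ik} - 1/n| ≤ ε for all i, k whenever t - τ ≥ N. Define Φ_{i,t} = (1/t) Σ_{τ=0}^{t-1} Σ_{k=1}^n (A_{t,τ})_{ik} · Y_{k,τ}. Then for each i ∈ {1,…,n}, Φ_{i,t}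 converges in probability, as t → ∞, to the constant (1/n) Σ_{k=1}^n m_k. -/
open MeasureTheory ProbabilityTheory Filter Topology Finset Matrix

/-!
Write `Φ_{i,t} - (1/n) ∑ₖ mₖ` as the sum of the averages over `τ < t` of
`∑ₖ (A_{t,τ})ᵢₖ (Y_{k,τ} - mₖ)` and of `∑ₖ (A_{t,τ})ᵢₖ mₖ - (1/n) ∑ₖ mₖ`.
Since the matrices are independent of the signals, the cross moments of the first sum factor as
`E[aₚ a_q] E[Xₚ X_q]`; the centred signals are pairwise orthogonal and the weights lie in `[0, 1]`,
so its average has second moment at most `(∑ₖ vₖ) / t`, and Chebyshev's inequality applies.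
The second average tends to `0` almost surely: apart from the last `N` indices `τ`, whose bounded
contribution is divided by `t`, the rows of `A_{t,τ}` are uniformly close to the uniform row.
-/

namespace MeasureTheory

variable {ι α E : Type*} {mα : MeasurableSpace α} {μ : Measure α} {l : Filter ι}

theorem TendstoInMeasure.add [SeminormedAddCommGroup E] {f g : ι → α → E} {f' g' : α → E}
    (hf : TendstoInMeasure μ f l f') (hg : TendstoInMeasure μ g l g') :
    TendstoInMeasure μ (f + g) l (f' + g') := by
  rw [tendstoInMeasure_iff_norm] at *
  intro ε hε
  have hsub : ∀ i, {x | ε ≤ ‖(f + g) i x - (f' + g') x‖} ⊆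
      {x | ε / 2 ≤ ‖f i x - f' x‖} ∪ {x | ε / 2 ≤ ‖g i x - g' x‖} := by
    intro i x hx
    by_contra hcon
    simp only [Set.mem_union, Set.mem_ofPred_eq, not_or, not_le] at hx hcon
    have := norm_add_le (f i x - f' x) (g i x - g' x)
    rw [sub_add_sub_comm] at this
    simp only [Pi.add_apply] at hx
    linarith
  refine tendsto_of_tendsto_of_tendsto_of_le_of_le tendsto_const_nhds
    (by simpa using (hf _ (half_pos hε)).add (hg _ (half_pos hε))) (fun _ => zero_le)
    fun i => (measure_mono (hsub i)).trans (measure_union_le _ _)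

theorem tendstoInMeasure_zero_of_tendsto_integral_sq [IsFiniteMeasure μ] {f : ι → α → ℝ}
    (hf : ∀ i, MemLp (f i) 2 μ) (h : Tendsto (fun i => ∫ x, f i x ^ 2 ∂μ) l (𝓝 0)) :
    TendstoInMeasure μ f l 0 := by
  rw [tendstoInMeasure_iff_measureReal_dist]
  intro ε hε
  have hbound : ∀ i, μ.real {x | ε ≤ dist (f i x) ((0 : α → ℝ) x)} ≤
      (∫ x, f i x ^ 2 ∂μ) / ε ^ 2 := by
    intro i
    rw [le_div_iff₀ (by positivity), mul_comm]
    refine le_trans (mul_le_mul_of_nonneg_left (measureReal_mono ?_) (by positivity))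
      (mul_meas_ge_le_integral_of_nonneg (ae_of_all _ fun x => sq_nonneg (f i x))
        (hf i).integrable_sq (ε ^ 2))
    intro x hx
    simp only [Set.mem_ofPred_eq, Pi.zero_apply, Real.dist_eq, sub_zero] at hx ⊢
    simpa only [sq_abs] using pow_le_pow_left₀ hε.le hx 2
  exact squeeze_zero (fun i => measureReal_nonneg) hbound (by simpa using h.div_const (ε ^ 2))

end MeasureTheory

theorem tendsto_avg_of_tendsto_lag {b : ℕ → ℕ → ℝ} {L B : ℝ}
    (hB : ∀ t τ, τ < t → |b t τ - L| ≤ B)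
    (hb : ∀ ε > 0, ∃ N : ℕ, ∀ t τ, τ < t → N ≤ t - τ → |b t τ - L| ≤ ε) :
    Tendsto (fun t : ℕ => (1 / (t : ℝ)) * ∑ τ ∈ range t, b t τ) atTop (𝓝 L) := by
  rw [Metric.tendsto_nhds]
  intro ε hε
  obtain ⟨N, hN⟩ := hb (ε / 2) (half_pos hε)
  have hbound : ∀ t : ℕ, N ≤ t → 0 < t →
      |(1 / (t : ℝ)) * ∑ τ ∈ range t, b t τ - L| ≤ ε / 2 + N * B / t := by
    intro t hNt ht
    have htR : (0 : ℝ) < t := by exact_mod_cast ht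
    have hsum : ∑ τ ∈ range t, |b t τ - L| ≤ t * (ε / 2) + N * B := by
      rw [← sum_range_add_sum_Ico _ (Nat.sub_le t N)]
      gcongr
      · calc ∑ τ ∈ range (t - N), |b t τ - L| ≤ ∑ τ ∈ range (t - N), ε / 2 :=
              sum_le_sum fun τ hτ => by
                rw [mem_range] at hτ
                exact hN t τ (by omega) (by omega)
          _ ≤ t * (ε / 2) := by
              rw [sum_const, card_range, nsmul_eq_mul]
              gcongr
              exact_mod_cast Nat.sub_le t N
      · calc ∑ τ ∈ Ico (t - N) t, |b t τ - L| ≤ ∑ τ ∈ Ico (t - N) t, B :=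
              sum_le_sum fun τ hτ => hB t τ (mem_Ico.1 hτ).2
          _ = N * B := by
              rw [sum_const, Nat.card_Ico, nsmul_eq_mul, Nat.sub_sub_self hNt]
    calc |(1 / (t : ℝ)) * ∑ τ ∈ range t, b t τ - L|
        = (1 / (t : ℝ)) * |∑ τ ∈ range t, (b t τ - L)| := by
          rw [← abs_of_pos (one_div_pos.mpr htR), ← abs_mul, abs_of_pos (one_div_pos.mpr htR),
            sum_sub_distrib, sum_const, card_range, nsmul_eq_mul]
          field_simp
      _ ≤ (1 / (t : ℝ)) * (t * (ε / 2) + N * B) := by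
          gcongr
          exact (abs_sum_le_sum_abs _ _).trans hsum
      _ = ε / 2 + N * B / t := by field_simp
  have hsmall : ∀ᶠ t : ℕ in atTop, (N * B) / t < ε / 2 :=
    (tendsto_const_div_atTop_nhds_zero_nat (N * B)).eventually (gt_mem_nhds (half_pos hε))
  filter_upwards [hsmall, eventually_ge_atTop N, eventually_gt_atTop 0] with t hsmall hNt ht
  rw [Real.dist_eq]
  linarith [hbound t hNt ht]

theorem abs_sum_mul_le_of_mem_rowStochastic {ι : Type*} [Fintype ι] [DecidableEq ι]
    {M : Matrix ι ι ℝ} (hM : M ∈ rowStochastic ℝ ι) (i : ι) (x : ι → ℝ) :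
    |∑ k, M i k * x k| ≤ ∑ k, |x k| :=
  calc |∑ k, M i k * x k| ≤ ∑ k, |M i k * x k| := abs_sum_le_sum_abs _ _
    _ ≤ ∑ k, |x k| := sum_le_sum fun k _ => by
        rw [abs_mul, abs_of_nonneg (nonneg_of_mem_rowStochastic hM)]
        exact mul_le_of_le_one_left (abs_nonneg _) (le_one_of_mem_rowStochastic hM)

theorem tendsto_avg_rowStochastic_of_tendsto_lag {n : ℕ}
    {M : ℕ → ℕ → Matrix (Fin n) (Fin n) ℝ} (hM : ∀ t τ, τ < t → M t τ ∈ rowStochastic ℝ (Fin n))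
    (hlim : ∀ ε > 0, ∃ N : ℕ, ∀ t τ, τ < t → N ≤ t - τ →
      ∀ i k, |M t τ i k - 1 / (n : ℝ)| ≤ ε) (i : Fin n) (x : Fin n → ℝ) :
    Tendsto (fun t : ℕ => (1 / (t : ℝ)) * ∑ τ ∈ range t, ∑ k, M t τ i k * x k) atTop
      (𝓝 ((1 / (n : ℝ)) * ∑ k, x k)) := by
  set S := ∑ k, |x k|
  have hdev : ∀ t τ, |∑ k, M t τ i k * x k - (1 / (n : ℝ)) * ∑ k, x k| ≤
      ∑ k, |M t τ i k - 1 / (n : ℝ)| * |x k| := by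
    intro t τ
    rw [mul_sum, ← sum_sub_distrib]
    refine (abs_sum_le_sum_abs _ _).trans_eq (sum_congr rfl fun k _ => ?_)
    rw [← sub_mul, abs_mul]
  refine tendsto_avg_of_tendsto_lag (B := S + |(1 / (n : ℝ)) * ∑ k, x k|)
    (fun t τ hτ => (abs_sub _ _).trans
      (by gcongr; exact abs_sum_mul_le_of_mem_rowStochastic (hM t τ hτ) i x))
    fun ε hε => ?_
  obtain ⟨N, hN⟩ := hlim (ε / (S + 1)) (by positivity)
  refine ⟨N, fun t τ hτ hNτ => (hdev t τ).trans ?_⟩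
  calc ∑ k, |M t τ i k - 1 / (n : ℝ)| * |x k| ≤ ∑ k, ε / (S + 1) * |x k| :=
        sum_le_sum fun k _ => mul_le_mul_of_nonneg_right (hN t τ hτ hNτ i k) (abs_nonneg _)
    _ = ε * (S / (S + 1)) := by rw [← mul_sum]; ring
    _ ≤ ε := mul_le_of_le_one_right hε.le ((div_le_one (by positivity)).mpr (by linarith))

namespace ProbabilityTheory

variable {Ω ι : Type*} {mΩ : MeasurableSpace Ω} {μ : Measure Ω}

theorem Indep.indepFun_of_measurable {m₁ m₂ : MeasurableSpace Ω} (h : Indep m₁ m₂ μ)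
    {f g : Ω → ℝ} (hf : Measurable[m₁] f) (hg : Measurable[m₂] g) : IndepFun f g μ :=
  (IndepFun_iff_Indep f g μ).2
    (indep_of_indep_of_le_left (indep_of_indep_of_le_right h hg.comap_le) hf.comap_le)

theorem integral_sq_sum_mul_le_sum_integral_sq [IsProbabilityMeasure μ] {m₁ m₂ : MeasurableSpace Ω}
    (hm₁ : m₁ ≤ mΩ) (hind : Indep m₁ m₂ μ) {s : Finset ι} {a X : ι → Ω → ℝ}
    (ha : ∀ p ∈ s, Measurable[m₁] (a p)) (ha_le : ∀ p ∈ s, ∀ᵐ ω ∂μ, |a p ω| ≤ 1)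
    (hX : ∀ p ∈ s, Measurable[m₂] (X p)) (hXL2 : ∀ p ∈ s, MemLp (X p) 2 μ)
    (horth : ∀ p ∈ s, ∀ q ∈ s, p ≠ q → ∫ ω, X p ω * X q ω ∂μ = 0) :
    ∫ ω, (∑ p ∈ s, a p ω * X p ω) ^ 2 ∂μ ≤ ∑ p ∈ s, ∫ ω, X p ω ^ 2 ∂μ := by
  have ha' : ∀ p ∈ s, AEStronglyMeasurable[mΩ] (a p) μ := fun p hp =>
    ((ha p hp).mono hm₁ le_rfl).aestronglyMeasurable
  have hterm : ∀ p ∈ s, MemLp (a p * X p) 2 μ := fun p hp =>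
    (hXL2 p hp).mul (memLp_top_of_bound (ha' p hp) 1 (ha_le p hp))
  have hcross : ∀ p ∈ s, ∀ q ∈ s, ∫ ω, a p ω * X p ω * (a q ω * X q ω) ∂μ =
      (∫ ω, a p ω * a q ω ∂μ) * ∫ ω, X p ω * X q ω ∂μ := by
    intro p hp q hq
    calc ∫ ω, a p ω * X p ω * (a q ω * X q ω) ∂μ
        = ∫ ω, (a p ω * a q ω) * (X p ω * X q ω) ∂μ := by congr 1 with ω; ring
      _ = _ := (hind.indepFun_of_measurable ((ha p hp).mul (ha q hq))
          ((hX p hp).mul (hX q hq))).integral_fun_mul_eq_mul_integral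
          ((ha' p hp).mul (ha' q hq)) ((hXL2 p hp).1.mul (hXL2 q hq).1)
  have hdiag : ∀ p ∈ s, ∫ ω, a p ω * X p ω * (a p ω * X p ω) ∂μ ≤ ∫ ω, X p ω ^ 2 ∂μ := by
    intro p hp
    rw [hcross p hp p hp]
    have hsq : ∫ ω, X p ω * X p ω ∂μ = ∫ ω, X p ω ^ 2 ∂μ := by simp only [sq]
    have ha_sq : ∫ ω, a p ω * a p ω ∂μ ≤ 1 :=
      calc ∫ ω, a p ω * a p ω ∂μ ≤ ∫ _, (1 : ℝ) ∂μ :=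
            integral_mono_of_nonneg (ae_of_all _ fun ω => mul_self_nonneg _) (integrable_const 1)
              (by filter_upwards [ha_le p hp] with ω hω
                  rw [← abs_mul_abs_self]
                  exact mul_le_one₀ hω (abs_nonneg _) hω)
        _ = 1 := by simp
    rw [hsq]
    exact mul_le_of_le_one_left (integral_nonneg fun ω => sq_nonneg _) ha_sq
  calc ∫ ω, (∑ p ∈ s, a p ω * X p ω) ^ 2 ∂μ
      = ∑ p ∈ s, ∑ q ∈ s, ∫ ω, a p ω * X p ω * (a q ω * X q ω) ∂μ := by
        simp_rw [sq, sum_mul_sum]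
        rw [integral_finsetSum (f := fun p ω => ∑ q ∈ s, a p ω * X p ω * (a q ω * X q ω)) _
          fun p hp => integrable_finsetSum _ fun q hq => (hterm p hp).integrable_mul (hterm q hq)]
        exact sum_congr rfl fun p hp => integral_finsetSum _ fun q hq =>
          (hterm p hp).integrable_mul (hterm q hq)
    _ = ∑ p ∈ s, ∫ ω, a p ω * X p ω * (a p ω * X p ω) ∂μ :=
        sum_congr rfl fun p hp => sum_eq_single_of_mem p hp fun q hq hqp => by
          rw [hcross p hp q hq, horth p hp q hq hqp.symm, mul_zero]
    _ ≤ ∑ p ∈ s, ∫ ω, X p ω ^ 2 ∂μ := sum_le_sum hdiag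

theorem tendstoInMeasure_avg_weighted_centered [IsProbabilityMeasure μ] {n : ℕ}
    {m₁ m₂ : MeasurableSpace Ω} (hm₁ : m₁ ≤ mΩ) (hind : Indep m₁ m₂ μ)
    {Y : Fin n → ℕ → Ω → ℝ} (hY : ∀ k τ, Measurable[m₂] (Y k τ))
    (hYL2 : ∀ k τ, MemLp (Y k τ) 2 μ) (hYindep : iIndepFun (fun p : Fin n × ℕ => Y p.1 p.2) μ)
    {meanY v : Fin n → ℝ} (hmean : ∀ k τ, ∫ ω, Y k τ ω ∂μ = meanY k)
    (hvar : ∀ k τ, variance (Y k τ) μ = v k)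
    {A : ℕ → ℕ → Ω → Matrix (Fin n) (Fin n) ℝ}
    (hA : ∀ t τ i k, Measurable[m₁] (fun ω => A t τ ω i k))
    (hAstoch : ∀ᵐ ω ∂μ, ∀ t τ, τ < t → A t τ ω ∈ rowStochastic ℝ (Fin n)) (i : Fin n) :
    TendstoInMeasure μ (fun (t : ℕ) ω =>
      (1 / (t : ℝ)) * ∑ τ ∈ range t, ∑ k, A t τ ω i k * (Y k τ ω - meanY k)) atTop 0 := by
  set X : Fin n × ℕ → Ω → ℝ := fun p ω => Y p.1 p.2 ω - meanY p.1
  set a : ℕ → Fin n × ℕ → Ω → ℝ := fun t p ω => A t p.2 ω i p.1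
  set s : ℕ → Finset (Fin n × ℕ) := fun t => univ ×ˢ range t
  have hsum : ∀ t ω, ∑ τ ∈ range t, ∑ k, A t τ ω i k * (Y k τ ω - meanY k) =
      ∑ p ∈ s t, a t p ω * X p ω := fun t ω => by
    rw [sum_product_right]
  have hXL2 : ∀ p, MemLp (X p) 2 μ := fun p => (hYL2 p.1 p.2).sub (memLp_const _)
  have ha : ∀ t p, AEStronglyMeasurable[mΩ] (a t p) μ := fun t p =>
    ((hA t p.2 i p.1).mono hm₁ le_rfl).aestronglyMeasurable
  have ha_le : ∀ t, ∀ p ∈ s t, ∀ᵐ ω ∂μ, |a t p ω| ≤ 1 := by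
    intro t p hp
    filter_upwards [hAstoch] with ω hω
    have hM := hω t p.2 (by simpa [s] using hp)
    exact abs_le.2 ⟨by linarith [nonneg_of_mem_rowStochastic hM (i := i) (j := p.1)],
      le_one_of_mem_rowStochastic hM⟩
  have horth : ∀ p q, p ≠ q → ∫ ω, X p ω * X q ω ∂μ = 0 := by
    intro p q hpq
    refine (((hYindep.indepFun hpq).comp (measurable_id.sub_const (meanY p.1))
      (measurable_id.sub_const (meanY q.1))).integral_fun_mul_eq_mul_integral
      (hXL2 p).1 (hXL2 q).1).trans ?_
    simp [integral_sub ((hYL2 _ _).integrable one_le_two), hmean]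
  have hXsq : ∀ p, ∫ ω, X p ω ^ 2 ∂μ = v p.1 := fun p => by
    rw [← hvar p.1 p.2, variance_eq_integral (hYL2 p.1 p.2).aemeasurable, hmean]
  have hbound : ∀ t : ℕ, ∫ ω, (∑ p ∈ s t, a t p ω * X p ω) ^ 2 ∂μ ≤ t * ∑ k, v k := fun t =>
    calc ∫ ω, (∑ p ∈ s t, a t p ω * X p ω) ^ 2 ∂μ ≤ ∑ p ∈ s t, ∫ ω, X p ω ^ 2 ∂μ :=
          integral_sq_sum_mul_le_sum_integral_sq hm₁ hind (fun p _ => hA t p.2 i p.1) (ha_le t)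
            (fun p _ => (hY p.1 p.2).sub_const _) (fun p _ => hXL2 p)
            fun p _ q _ => horth p q
      _ = t * ∑ k, v k := by
          simp [s, hXsq, sum_product_right, mul_comm]
  simp_rw [hsum]
  refine tendstoInMeasure_zero_of_tendsto_integral_sq (fun t => ?_) ?_
  · exact (memLp_finsetSum _ fun p hp =>
      (hXL2 p).mul (r := 2) (memLp_top_of_bound (ha t p) 1 (ha_le t p hp))).const_mul _
  · refine squeeze_zero (fun t => integral_nonneg fun ω => sq_nonneg _) (fun t => ?_)
      (tendsto_const_div_atTop_nhds_zero_nat (∑ k, v k))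
    simp_rw [mul_pow]
    rw [integral_const_mul]
    calc (1 / (t : ℝ)) ^ 2 * ∫ ω, (∑ p ∈ s t, a t p ω * X p ω) ^ 2 ∂μ
        ≤ (1 / (t : ℝ)) ^ 2 * (t * ∑ k, v k) := by gcongr; exact hbound t
      _ = (∑ k, v k) / t := by
          rcases Nat.eq_zero_or_pos t with rfl | ht
          · simp
          · field_simp

end ProbabilityTheory

theorem aggregated_loglikelihood_converges_in_probability_general
    {Ω : Type*} [MeasureSpace Ω] [IsProbabilityMeasure (ℙ : Measure Ω)]
    (n : ℕ)
    (Y : Fin n → ℕ → Ω → ℝ)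
    (hYL2 : ∀ k τ, MemLp (Y k τ) 2 ℙ)
    (hYindep : iIndepFun
      (fun p : Fin n × ℕ => Y p.1 p.2) ℙ)
    (meanY v : Fin n → ℝ)
    (hmean : ∀ k τ, ∫ ω, Y k τ ω ∂ℙ = meanY k)
    (hvar : ∀ k τ, variance (Y k τ) ℙ = v k)
    (A : ℕ → ℕ → Ω → Matrix (Fin n) (Fin n) ℝ)
    (hAmeas : ∀ t τ i k, Measurable (fun ω => A t τ ω i k))
    (hindepAY : Indep
      (⨆ (t : ℕ) (τ : ℕ) (i : Fin n) (k : Fin n),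
        MeasurableSpace.comap (fun ω => A t τ ω i k) inferInstance)
      (⨆ (k : Fin n) (τ : ℕ), MeasurableSpace.comap (Y k τ) inferInstance) ℙ)
    (hDS : ∀ᵐ ω ∂ℙ, ∀ t τ, τ < t →
      (∀ i k, 0 ≤ A t τ ω i k) ∧ (∀ i, ∑ k, A t τ ω i k = 1) ∧
        (∀ k, ∑ i, A t τ ω i k = 1))
    (hconv : ∀ᵐ ω ∂ℙ, ∀ ε > (0 : ℝ), ∃ N : ℕ, ∀ t τ, τ < t → N ≤ t - τ →
      ∀ i k, |A t τ ω i k - 1 / (n : ℝ)| ≤ ε)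
    (i : Fin n) :
    ∀ ε > (0 : ℝ), Filter.Tendsto
      (fun t : ℕ => ℙ {ω |
        ε ≤ |(1 / (t : ℝ)) * (∑ τ ∈ Finset.range t, ∑ k, A t τ ω i k * Y k τ ω) -
          (1 / (n : ℝ)) * ∑ k, meanY k|})
      Filter.atTop (nhds 0) := by
  have hstoch : ∀ᵐ ω ∂ℙ, ∀ t τ, τ < t → A t τ ω ∈ rowStochastic ℝ (Fin n) := by
    filter_upwards [hDS] with ω hω t τ hτ
    exact mem_rowStochastic_iff_sum.2 ⟨(hω t τ hτ).1, (hω t τ hτ).2.1⟩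
  have hfluct := tendstoInMeasure_avg_weighted_centered
    (iSup₂_le fun t τ => iSup₂_le fun i k => (hAmeas t τ i k).comap_le) hindepAY
    (fun k τ => (comap_measurable (Y k τ)).mono (le_iSup₂_of_le k τ le_rfl) le_rfl)
    hYL2 hYindep hmean hvar
    (fun t τ i k => (comap_measurable _).mono
      (le_iSup₂_of_le t τ (le_iSup₂_of_le i k le_rfl)) le_rfl)
    hstoch i
  have hdrift : TendstoInMeasure ℙ
      (fun (t : ℕ) ω => (1 / (t : ℝ)) * ∑ τ ∈ range t, ∑ k, A t τ ω i k * meanY k) atTop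
      (fun _ => (1 / (n : ℝ)) * ∑ k, meanY k) :=
    tendstoInMeasure_of_tendsto_ae (fun t => by fun_prop) (by
      filter_upwards [hstoch, hconv] with ω hω hωconv
      exact tendsto_avg_rowStochastic_of_tendsto_lag hω hωconv i meanY)
  have hΦ := tendstoInMeasure_iff_dist.mp (hfluct.add hdrift)
  intro ε hε
  convert hΦ ε hε using 4 with t ω
  simp only [Pi.add_apply, Pi.zero_apply, zero_add, Real.dist_eq, ← mul_add, ← sum_add_distrib,
    mul_sub, sub_add_cancel]

/-- Let `Y_{k,τ}` be an independent family of square-integrable random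
variables, identically distributed in `τ` for each fixed `k`, with mean `m_k` and
variance `v_k`. Let `A_{t,τ}` be random matrices, independent of the `Y`'s, almost surely
doubly stochastic, and almost surely converging entrywise to `1/n` as `t - τ → ∞`. Then
`Φ_{i,t} = (1/t) ∑_{τ<t} ∑_k (A_{t,τ})_{ik} Y_{k,τ}` converges in probability to
`(1/n) ∑_k m_k`. -/
theorem aggregated_loglikelihood_converges_in_probability
    {Ω : Type*} [MeasureSpace Ω] [IsProbabilityMeasure (ℙ : Measure Ω)]
    (n : ℕ) (hn : 1 ≤ n)
    (Y : Fin n → ℕ → Ω → ℝ)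
    (hYmeas : ∀ k τ, Measurable (Y k τ))
    (hYL2 : ∀ k τ, MemLp (Y k τ) 2 ℙ)
    (hYindep : iIndepFun
      (fun p : Fin n × ℕ => Y p.1 p.2) ℙ)
    (hYid : ∀ k τ τ', IdentDistrib (Y k τ) (Y k τ') ℙ ℙ)
    (meanY v : Fin n → ℝ)
    (hmean : ∀ k τ, ∫ ω, Y k τ ω ∂ℙ = meanY k)
    (hvar : ∀ k τ, variance (Y k τ) ℙ = v k)
    (A : ℕ → ℕ → Ω → Matrix (Fin n) (Fin n) ℝ)
    (hAmeas : ∀ t τ i k, Measurable (fun ω => A t τ ω i k))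
    (hindepAY : Indep
      (⨆ (t : ℕ) (τ : ℕ) (i : Fin n) (k : Fin n),
        MeasurableSpace.comap (fun ω => A t τ ω i k) inferInstance)
      (⨆ (k : Fin n) (τ : ℕ), MeasurableSpace.comap (Y k τ) inferInstance) ℙ)
    (hDS : ∀ᵐ ω ∂ℙ, ∀ t τ, τ < t →
      (∀ i k, 0 ≤ A t τ ω i k) ∧ (∀ i, ∑ k, A t τ ω i k = 1) ∧
        (∀ k, ∑ i, A t τ ω i k = 1))
    (hconv : ∀ᵐ ω ∂ℙ, ∀ ε > (0 : ℝ), ∃ N : ℕ, ∀ t τ, τ < t → N ≤ t - τ →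
      ∀ i k, |A t τ ω i k - 1 / (n : ℝ)| ≤ ε)
    (i : Fin n) :
    ∀ ε > (0 : ℝ), Filter.Tendsto
      (fun t : ℕ => ℙ {ω |
        ε ≤ |(1 / (t : ℝ)) * (∑ τ ∈ Finset.range t, ∑ k, A t τ ω i k * Y k τ ω) -
          (1 / (n : ℝ)) * ∑ k, meanY k|})
      Filter.atTop (nhds 0) :=
  aggregated_loglikelihood_converges_in_probability_general n Y hYL2 hYindep meanY v hmean hvar A
    hAmeas hindepAY hDS hconv i
end

section
/- Let (Ω, F, P) be a probability space, m ≥ 2, let μ₀ ∈ ℝ^m lie in the probability simplex Δ_m with every entry strictly positive, and let Φ_t(j) : Ω → ℝ, for t ≥ 1 and j ∈ {1,…,m}, be random variables such that for each j, Φ_t(j) converges in probability to a constant c_j, where c_1 > c_j for every j ∈ {2,…,m}. Define the random Gibbs beliefs μ_t(j) = μ₀_j · exp(t·Φ_t(j)) / (Σ_{j'=1}^m μ₀_{j'} · exp(t·Φ_t(j'))). Then μ_t(1) → 1 in probability and μ_t(j) → 0 in probability for every j ∈ {2,…,m}; that is, the belief vector μ_t converges in probability to the standard basis vector e_1, so the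 estimator is weakly consistent. -/
/-!
On the event that every `Φ_t(j)` lies within a quarter of the gap `c_1 - max_{j ≥ 2} c_j` of
its limit, each exponent `t Φ_t(j)`, `j ≥ 2`, trails `t Φ_t(1)` by at least `t` times half the
gap, so the Gibbs weights are within `O(e^{-t·gap/2})` of `e_1` there. Since that bound tends to
zero, the bad event for `μ_t` is eventually contained in the bad event for `Φ_t`, whose
probability tends to zero.
-/

open MeasureTheory ProbabilityTheory Filter Topology Real Finset

namespace MeasureTheory

variable {α ι κ E F : Type*} {m : MeasurableSpace α} {μ : Measure α} {l : Filter ι}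

theorem TendstoInMeasure.pi [Fintype κ] [PseudoMetricSpace E] {f : ι → α → κ → E}
    {g : α → κ → E} (h : ∀ k, TendstoInMeasure μ (fun i x => f i x k) l (fun x => g x k)) :
    TendstoInMeasure μ f l g := by
  simp only [tendstoInMeasure_iff_dist] at h ⊢
  intro ε hε
  refine tendsto_of_tendsto_of_tendsto_of_le_of_le tendsto_const_nhds
    (by simpa using tendsto_finsetSum univ fun k _ => h k ε hε) (fun _ => zero_le) fun i => ?_
  refine (measure_mono fun x hx => ?_).trans (measure_iUnion_fintype_le μ _)
  by_contra hx'
  simp only [Set.mem_iUnion, Set.mem_ofPred_eq, not_exists, not_le] at hx hx'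
  exact hx.not_gt ((dist_pi_lt_iff hε).2 hx')

theorem TendstoInMeasure.of_dist_le_of_dist_lt [PseudoMetricSpace E] [PseudoMetricSpace F]
    {f : ι → α → E} {a : α → E} {g : ι → α → F} {b : α → F} {δ : ℝ} {r : ι → ℝ}
    (hf : TendstoInMeasure μ f l a) (hδ : 0 < δ) (hr : Tendsto r l (𝓝 0))
    (hfg : ∀ i x, dist (f i x) (a x) < δ → dist (g i x) (b x) ≤ r i) :
    TendstoInMeasure μ g l b := by
  rw [tendstoInMeasure_iff_dist] at hf ⊢
  intro ε hε
  refine tendsto_of_tendsto_of_tendsto_of_le_of_le' tendsto_const_nhds (hf δ hδ)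
    (Eventually.of_forall fun _ => zero_le) ?_
  filter_upwards [hr.eventually (gt_mem_nhds hε)] with i hri
  refine measure_mono fun x hx => ?_
  by_contra hx'
  simp only [Set.mem_ofPred_eq, not_le] at hx hx'
  exact hx.not_gt ((hfg i x hx').trans_lt hri)

end MeasureTheory

theorem exists_pos_forall_add_le_of_forall_lt [Finite κ] {c : κ → ℝ} {i : κ}
    (hc : ∀ k ≠ i, c k < c i) : ∃ g > 0, ∀ k ≠ i, c k + g ≤ c i := by
  have hev : ∀ᶠ g in 𝓝[>] (0 : ℝ), ∀ k, k ≠ i → c k + g ≤ c i :=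
    eventually_all.2 fun k => eventually_imp_distrib_left.2 fun hk => nhdsWithin_le_nhds <|
      (gt_mem_nhds (sub_pos.2 (hc k hk))).mono fun _ hg => by linarith
  obtain ⟨g, hgap, hg⟩ := (hev.and self_mem_nhdsWithin).exists
  exact ⟨g, hg, hgap⟩

section Gibbs

variable [Fintype κ] {w x : κ → ℝ}

noncomputable def gibbs (w x : κ → ℝ) (j : κ) : ℝ :=
  w j * exp (x j) / ∑ k, w k * exp (x k)

theorem gibbs_nonneg (hw : ∀ k, 0 ≤ w k) (j : κ) : 0 ≤ gibbs w x j :=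
  div_nonneg (mul_nonneg (hw j) (exp_pos _).le)
    (sum_nonneg fun k _ => mul_nonneg (hw k) (exp_pos _).le)

theorem sum_gibbs (hw : ∀ k, 0 ≤ w k) {i : κ} (hi : 0 < w i) : ∑ j, gibbs w x j = 1 := by
  have hpos : 0 < ∑ k, w k * exp (x k) :=
    (mul_pos hi (exp_pos _)).trans_le <|
      single_le_sum (fun k _ => mul_nonneg (hw k) (exp_pos _).le) (mem_univ i)
  simp only [gibbs]
  rw [← sum_div]
  exact div_self hpos.ne'

theorem gibbs_le_mul_exp_sub (hw : ∀ k, 0 ≤ w k) {i : κ} (hi : 0 < w i) (j : κ) :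
    gibbs w x j ≤ w j / w i * exp (x j - x i) := by
  have hden : w i * exp (x i) ≤ ∑ k, w k * exp (x k) :=
    single_le_sum (fun k _ => mul_nonneg (hw k) (exp_pos _).le) (mem_univ i)
  calc gibbs w x j ≤ w j * exp (x j) / (w i * exp (x i)) :=
        div_le_div_of_nonneg_left (mul_nonneg (hw j) (exp_pos _).le)
          (mul_pos hi (exp_pos _)) hden
    _ = w j / w i * exp (x j - x i) := by rw [exp_sub]; field_simp

theorem abs_gibbs_sub_single_le [DecidableEq κ] (hw : ∀ k, 0 ≤ w k) {i : κ} (hi : 0 < w i)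
    {s : ℝ} (hx : ∀ k ≠ i, x k - x i ≤ -s) (j : κ) :
    |gibbs w x j - (Pi.single i 1 : κ → ℝ) j| ≤ (∑ k, w k) / w i * exp (-s) := by
  have hoff : ∀ k ≠ i, gibbs w x k ≤ w k / w i * exp (-s) := fun k hk =>
    (gibbs_le_mul_exp_sub hw hi k).trans <|
      mul_le_mul_of_nonneg_left (exp_le_exp.2 (hx k hk)) (div_nonneg (hw k) hi.le)
  obtain rfl | hj := eq_or_ne j i
  · have hsplit := add_sum_erase univ (gibbs w x) (mem_univ j)
    rw [sum_gibbs hw hi] at hsplit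
    calc |gibbs w x j - (Pi.single j 1 : κ → ℝ) j| = ∑ k ∈ univ.erase j, gibbs w x k := by
          rw [Pi.single_eq_same, ← hsplit, sub_add_cancel_left, abs_neg,
            abs_of_nonneg (sum_nonneg fun k _ => gibbs_nonneg hw k)]
      _ ≤ ∑ k ∈ univ.erase j, w k / w j * exp (-s) :=
          sum_le_sum fun k hk => hoff k (ne_of_mem_erase hk)
      _ ≤ ∑ k, w k / w j * exp (-s) :=
          sum_le_sum_of_subset_of_nonneg (erase_subset _ _) fun k _ _ =>
            mul_nonneg (div_nonneg (hw k) hi.le) (exp_pos _).le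
      _ = (∑ k, w k) / w j * exp (-s) := by rw [← sum_mul, sum_div]
  · rw [Pi.single_eq_of_ne hj, sub_zero, abs_of_nonneg (gibbs_nonneg hw j)]
    refine (hoff j hj).trans (mul_le_mul_of_nonneg_right ?_ (exp_pos _).le)
    exact div_le_div_of_nonneg_right (single_le_sum (fun k _ => hw k) (mem_univ j)) hi.le

end Gibbs

theorem tendstoInMeasure_gibbs_smul [Fintype κ] [DecidableEq κ] {_ : MeasurableSpace α}
    {μ : Measure α} {w : κ → ℝ} (hw : ∀ k, 0 ≤ w k) {i : κ} (hi : 0 < w i)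
    {X : ℕ → α → κ → ℝ} {c : κ → ℝ} (hX : TendstoInMeasure μ X atTop fun _ => c)
    (hc : ∀ k ≠ i, c k < c i) (j : κ) :
    TendstoInMeasure μ (fun (t : ℕ) x => gibbs w ((t : ℝ) • X t x) j) atTop
      fun _ => (Pi.single i 1 : κ → ℝ) j := by
  obtain ⟨g, hg, hgap⟩ := exists_pos_forall_add_le_of_forall_lt hc
  have hg4 : 0 < g / 4 := by positivity
  have hr : Tendsto (fun t : ℕ => (∑ k, w k) / w i * exp (-(t * (g / 2)))) atTop (𝓝 0) := by
    simpa using (tendsto_exp_neg_atTop_nhds_zero.comp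
      (tendsto_natCast_atTop_atTop.atTop_mul_const (half_pos hg))).const_mul _
  refine hX.of_dist_le_of_dist_lt hg4 hr fun t x hx => ?_
  have hclose := (dist_pi_lt_iff hg4).1 hx
  rw [Real.dist_eq]
  refine abs_gibbs_sub_single_le hw hi (fun k hk => ?_) j
  have hXk := abs_lt.1 (Real.dist_eq _ _ ▸ hclose k)
  have hXi := abs_lt.1 (Real.dist_eq _ _ ▸ hclose i)
  have hlag : X t x k - X t x i ≤ -(g / 2) := by linarith [hgap k hk]
  simp only [Pi.smul_apply, smul_eq_mul, ← mul_sub, ← mul_neg]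
  exact mul_le_mul_of_nonneg_left hlag t.cast_nonneg

/-- If the random exponents `Φ_t(j)` converge in probability to constants
`c_j` with `c_1 > c_j` for every `j ≠ 1`, then the random Gibbs beliefs
`μ_t(j) = μ₀_j exp(t Φ_t(j)) / ∑_{j'} μ₀_{j'} exp(t Φ_t(j'))` converge in probability to
the standard basis vector `e_1`: `μ_t(1) → 1` and `μ_t(j) → 0` for `j ≠ 1` in probability
(state `1` is represented by the index `⟨0, _⟩ : Fin m`). -/
theorem gibbs_beliefs_weakly_consistent
    {Ω : Type*} [MeasureSpace Ω]
    (m : ℕ) (hm : 2 ≤ m) (μ0 : Fin m → ℝ)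
    (hμ0pos : ∀ j, 0 < μ0 j)
    (Φ : ℕ → Fin m → Ω → ℝ) (c : Fin m → ℝ)
    (hc : ∀ j : Fin m, j ≠ ⟨0, by omega⟩ → c j < c ⟨0, by omega⟩)
    (hΦconv : ∀ j : Fin m, ∀ ε > (0 : ℝ), Filter.Tendsto
      (fun t : ℕ => ℙ {ω | ε ≤ |Φ t j ω - c j|}) Filter.atTop (nhds 0))
    (μ : ℕ → Fin m → Ω → ℝ)
    (hμ : ∀ t j ω, μ t j ω = μ0 j * Real.exp ((t : ℝ) * Φ t j ω) /
      ∑ j', μ0 j' * Real.exp ((t : ℝ) * Φ t j' ω)) :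
    (∀ ε > (0 : ℝ), Filter.Tendsto
      (fun t : ℕ => ℙ {ω | ε ≤ |μ t ⟨0, by omega⟩ ω - 1|}) Filter.atTop (nhds 0)) ∧
      ∀ j : Fin m, j ≠ ⟨0, by omega⟩ → ∀ ε > (0 : ℝ), Filter.Tendsto
        (fun t : ℕ => ℙ {ω | ε ≤ |μ t j ω - 0|}) Filter.atTop (nhds 0) := by
  have hμ_gibbs : μ = fun (t : ℕ) j ω => gibbs μ0 ((t : ℝ) • fun j => Φ t j ω) j := by
    ext t j ω
    simp [hμ, gibbs]
  have hX : TendstoInMeasure ℙ (fun t ω j => Φ t j ω) atTop fun _ => c :=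
    TendstoInMeasure.pi fun j => tendstoInMeasure_iff_dist.2 <| by
      simpa only [Real.dist_eq] using hΦconv j
  have hbeliefs j := tendstoInMeasure_iff_dist.1 <|
    tendstoInMeasure_gibbs_smul (fun k => (hμ0pos k).le) (hμ0pos _) hX hc j
  refine ⟨fun ε hε => ?_, fun j hj ε hε => ?_⟩
  · simpa only [hμ_gibbs, Real.dist_eq, Pi.single_eq_same] using hbeliefs ⟨0, by omega⟩ ε hε
  · simpa only [hμ_gibbs, Real.dist_eq, Pi.single_eq_of_ne hj] using hbeliefs j ε hε
end

section
/- Let m ≥ 1 and let μ₀ ∈ ℝ^m lie in the probability simplex Δ_m with every entry strictly positive. Then the Kullback–Leibler divergence ψ(x) = Σ_{j=1}^m x_j log(x_j/μ₀_j) is 1-strongly convex with respect to the ℓ₁-norm on Δ_m: for all x, y ∈ Δ_m and all λ ∈ [0,1], ψ(λx + (1-λ)y) ≤ λ·ψ(x) + (1-λ)·ψ(y) - (1/2)·λ·(1-λ)·‖x - y‖₁², where ‖z‖₁ = Σ_j |z_j|. -/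
/-!
With `z = l x + (1 - l) y`, the convexity gap `l ψ(x) + (1 - l) ψ(y) - ψ(z)` equals
`l KL(x‖z) + (1 - l) KL(y‖z)`: the `log (z / μ₀)` parts cancel by linearity. Pinsker's inequality
`‖p - q‖₁² ≤ 2 KL(p‖q)` bounds this below by `½ l (1 - l)² ‖x - y‖₁² + ½ (1 - l) l² ‖x - y‖₁²`,
which is `½ l (1 - l) ‖x - y‖₁²`. Pinsker's inequality in turn follows from Cauchy–Schwarz with
weights `2 p + 4 q`, which sum to `6`, and the scalar bound `3 (t - 1)² ≤ (2 t + 4) klFun t`.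
-/

open Real Set InformationTheory

theorem isMinOn_Ici_of_hasDerivAt {f f' : ℝ → ℝ} {a c : ℝ} (hac : a ≤ c)
    (hf : ContinuousOn f (Ici a)) (hf' : ∀ x ∈ Ioi a, HasDerivAt f (f' x) x)
    (hneg : ∀ x ∈ Ioo a c, f' x ≤ 0) (hpos : ∀ x ∈ Ioi c, 0 ≤ f' x) :
    IsMinOn f (Ici a) c := by
  intro x hx
  rcases le_total x c with hxc | hcx
  · have hanti : AntitoneOn f (Icc a c) :=
      antitoneOn_of_hasDerivWithinAt_nonpos (convex_Icc a c) (hf.mono Icc_subset_Ici_self)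
        (fun y hy ↦ by rw [interior_Icc] at hy ⊢; exact (hf' y hy.1).hasDerivWithinAt)
        (by rwa [interior_Icc])
    exact hanti ⟨hx, hxc⟩ ⟨hac, le_rfl⟩ hxc
  · have hmono : MonotoneOn f (Ici c) :=
      monotoneOn_of_hasDerivWithinAt_nonneg (convex_Ici c) (hf.mono (Ici_subset_Ici.2 hac))
        (fun y hy ↦ by
          rw [interior_Ici] at hy ⊢; exact (hf' y (hac.trans_lt hy)).hasDerivWithinAt)
        (by rwa [interior_Ici])
    exact hmono self_mem_Ici hcx hcx

theorem monotoneOn_add_one_mul_log_sub_two_mul_sub_one :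
    MonotoneOn (fun t : ℝ ↦ (t + 1) * log t - 2 * (t - 1)) (Ioi 0) := by
  have hderiv : ∀ t ∈ Ioi (0 : ℝ),
      HasDerivAt (fun t : ℝ ↦ (t + 1) * log t - 2 * (t - 1)) (log t + 1 + t⁻¹ - 2) t :=
    fun t (ht : 0 < t) ↦ by
      refine ((((hasDerivAt_id' t).add_const 1).mul (hasDerivAt_log ht.ne')).sub
        (((hasDerivAt_id' t).sub_const 1).const_mul 2)).congr_deriv ?_
      rw [add_mul, mul_inv_cancel₀ ht.ne']
      ring
  refine monotoneOn_of_hasDerivWithinAt_nonneg (convex_Ioi 0)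
    (fun t ht ↦ (hderiv t ht).continuousAt.continuousWithinAt)
    (fun t ht ↦ by rw [interior_Ioi] at ht ⊢; exact (hderiv t ht).hasDerivWithinAt) ?_
  rw [interior_Ioi]
  intro t (ht : 0 < t)
  linarith [one_sub_inv_le_log_of_pos ht]

theorem three_mul_sub_one_sq_le_mul_klFun {t : ℝ} (ht : 0 ≤ t) :
    3 * (t - 1) ^ 2 ≤ (2 * t + 4) * klFun t := by
  have hderiv : ∀ s ∈ Ioi (0 : ℝ), HasDerivAt (fun t ↦ (2 * t + 4) * klFun t - 3 * (t - 1) ^ 2)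
      (4 * ((s + 1) * log s - 2 * (s - 1))) s := fun s hs ↦ by
    refine (((((hasDerivAt_id' s).const_mul 2).add_const 4).mul (hasDerivAt_klFun hs.ne')).sub
      ((((hasDerivAt_id' s).sub_const 1).pow 2).const_mul 3)).congr_deriv ?_
    rw [klFun_apply]
    ring
  have hmin := isMinOn_Ici_of_hasDerivAt zero_le_one (by unfold klFun; fun_prop) hderiv
    (fun s hs ↦ by
      have := monotoneOn_add_one_mul_log_sub_two_mul_sub_one hs.1 (mem_Ioi.2 one_pos) hs.2.le
      norm_num at this
      linarith)
    (fun s (hs : 1 < s) ↦ by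
      have := monotoneOn_add_one_mul_log_sub_two_mul_sub_one (mem_Ioi.2 one_pos)
        (mem_Ioi.2 (one_pos.trans hs)) hs.le
      norm_num at this
      linarith) ht
  norm_num [klFun_one] at hmin
  linarith

theorem three_mul_sub_sq_div_le_mul_log_div {p q : ℝ} (hp : 0 ≤ p) (hq : 0 ≤ q)
    (hpq : q = 0 → p = 0) :
    3 * (p - q) ^ 2 / (2 * p + 4 * q) ≤ p * log (p / q) - p + q := by
  rcases hq.eq_or_lt with rfl | hq
  · simp [hpq rfl]
  have hklFun : p * log (p / q) - p + q = q * klFun (p / q) := by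
    rw [klFun_apply]
    field_simp
    ring
  rw [hklFun, div_le_iff₀ (by positivity)]
  have := mul_le_mul_of_nonneg_left (three_mul_sub_one_sq_le_mul_klFun (div_nonneg hp hq.le))
    (sq_nonneg q)
  calc 3 * (p - q) ^ 2 = q ^ 2 * (3 * (p / q - 1) ^ 2) := by field_simp
    _ ≤ q ^ 2 * ((2 * (p / q) + 4) * klFun (p / q)) := this
    _ = q * klFun (p / q) * (2 * p + 4 * q) := by field_simp

theorem eq_zero_and_eq_zero_of_mul_add_one_sub_mul_eq_zero {a b l : ℝ} (ha : 0 ≤ a) (hb : 0 ≤ b)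
    (hl0 : 0 < l) (hl1 : l < 1) (h : l * a + (1 - l) * b = 0) : a = 0 ∧ b = 0 := by
  obtain ⟨hla, hlb⟩ :=
    (add_eq_zero_iff_of_nonneg (mul_nonneg hl0.le ha) (mul_nonneg (sub_nonneg.2 hl1.le) hb)).1 h
  exact ⟨(mul_eq_zero.1 hla).resolve_left hl0.ne',
    (mul_eq_zero.1 hlb).resolve_left (sub_ne_zero.2 hl1.ne')⟩

section RelEntropy

variable {ι : Type*} [Fintype ι]

/-- Since `x / 0 = 0` and `log 0 = 0`, this is finite even where `μ i = 0 < x i`, although the true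
divergence is then `∞`; hence the support hypotheses below. -/
noncomputable def relEntropy (x μ : ι → ℝ) : ℝ := ∑ i, x i * log (x i / μ i)

theorem pinsker_stdSimplex {x z : ι → ℝ} (hx : x ∈ stdSimplex ℝ ι) (hz : z ∈ stdSimplex ℝ ι)
    (hxz : ∀ i, z i = 0 → x i = 0) :
    (∑ i, |x i - z i|) ^ 2 ≤ 2 * relEntropy x z := by
  set w : ι → ℝ := fun i ↦ 2 * x i + 4 * z i
  have hw : ∀ i, 0 ≤ w i := fun i ↦ by have := hx.1 i; have := hz.1 i; positivity
  have hw_sum : ∑ i, w i = 6 := by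
    simp only [w, Finset.sum_add_distrib, ← Finset.mul_sum, hx.2, hz.2]
    norm_num
  calc (∑ i, |x i - z i|) ^ 2 ≤ (∑ i, (x i - z i) ^ 2 / w i) * ∑ i, w i := by
        refine Finset.sum_sq_le_sum_mul_sum_of_sq_le_mul _
          (fun i _ ↦ div_nonneg (sq_nonneg _) (hw i)) (fun i _ ↦ hw i) fun i _ ↦ ?_
        rw [sq_abs, div_mul_cancel_of_imp]
        intro hwi
        have := hx.1 i; have := hz.1 i
        have hzi : z i = 0 := by linarith
        simp [hzi, hxz i hzi]
    _ = 2 * ∑ i, 3 * (x i - z i) ^ 2 / (2 * x i + 4 * z i) := by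
        rw [hw_sum, Finset.mul_sum, Finset.sum_mul]
        exact Finset.sum_congr rfl fun i _ ↦ by ring
    _ ≤ 2 * ∑ i, (x i * log (x i / z i) - x i + z i) := by
        gcongr with i
        exact three_mul_sub_sq_div_le_mul_log_div (hx.1 i) (hz.1 i) (hxz i)
    _ = 2 * relEntropy x z := by
        rw [Finset.sum_add_distrib, Finset.sum_sub_distrib, hx.2, hz.2, relEntropy]
        ring

theorem relEntropy_eq_relEntropy_add {x z μ : ι → ℝ} (hμ : ∀ i, μ i ≠ 0)
    (hxz : ∀ i, z i = 0 → x i = 0) :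
    relEntropy x μ = relEntropy x z + ∑ i, x i * log (z i / μ i) := by
  rw [relEntropy, relEntropy, ← Finset.sum_add_distrib]
  refine Finset.sum_congr rfl fun i _ ↦ ?_
  by_cases hx : x i = 0
  · simp [hx]
  have hz : z i ≠ 0 := mt (hxz i) hx
  rw [← mul_add, ← log_mul (div_ne_zero hx hz) (div_ne_zero hz (hμ i)),
    div_mul_div_cancel₀ hz]

theorem relEntropy_mixture_gap {x y z μ : ι → ℝ} {l : ℝ}
    (hz : ∀ i, z i = l * x i + (1 - l) * y i) (hμ : ∀ i, μ i ≠ 0)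
    (hxz : ∀ i, z i = 0 → x i = 0) (hyz : ∀ i, z i = 0 → y i = 0) :
    l * relEntropy x μ + (1 - l) * relEntropy y μ - relEntropy z μ =
      l * relEntropy x z + (1 - l) * relEntropy y z := by
  have hzμ : relEntropy z μ =
      l * ∑ i, x i * log (z i / μ i) + (1 - l) * ∑ i, y i * log (z i / μ i) := by
    rw [relEntropy, Finset.mul_sum, Finset.mul_sum, ← Finset.sum_add_distrib]
    exact Finset.sum_congr rfl fun i _ ↦ by rw [hz]; ring
  rw [relEntropy_eq_relEntropy_add hμ hxz, relEntropy_eq_relEntropy_add hμ hyz, hzμ]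
  ring

theorem relEntropy_mixture_le {x y μ : ι → ℝ} (hμ : ∀ i, μ i ≠ 0) (hx : x ∈ stdSimplex ℝ ι)
    (hy : y ∈ stdSimplex ℝ ι) {l : ℝ} (hl0 : 0 ≤ l) (hl1 : l ≤ 1) :
    relEntropy (fun i ↦ l * x i + (1 - l) * y i) μ ≤
      l * relEntropy x μ + (1 - l) * relEntropy y μ -
        1 / 2 * l * (1 - l) * (∑ i, |x i - y i|) ^ 2 := by
  rcases hl0.eq_or_lt with rfl | hl0
  · simp
  rcases hl1.eq_or_lt with rfl | hl1
  · simp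
  set z := fun i ↦ l * x i + (1 - l) * y i
  have hz : z ∈ stdSimplex ℝ ι := convex_stdSimplex ℝ ι hx hy hl0.le (by linarith) (by ring)
  have hsupp : ∀ i, z i = 0 → x i = 0 ∧ y i = 0 := fun i ↦
    eq_zero_and_eq_zero_of_mul_add_one_sub_mul_eq_zero (hx.1 i) (hy.1 i) hl0 hl1
  have hgap := relEntropy_mixture_gap (z := z) (fun i ↦ rfl) hμ (fun i h ↦ (hsupp i h).1)
    (fun i h ↦ (hsupp i h).2)
  have hdist_x : ∑ i, |x i - z i| = (1 - l) * ∑ i, |x i - y i| := by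
    rw [Finset.mul_sum]
    refine Finset.sum_congr rfl fun i _ ↦ ?_
    rw [show x i - z i = (1 - l) * (x i - y i) by simp only [z]; ring, abs_mul,
      abs_of_pos (sub_pos.2 hl1)]
  have hdist_y : ∑ i, |y i - z i| = l * ∑ i, |x i - y i| := by
    rw [Finset.mul_sum]
    refine Finset.sum_congr rfl fun i _ ↦ ?_
    rw [show y i - z i = l * (y i - x i) by simp only [z]; ring, abs_mul, abs_of_pos hl0,
      abs_sub_comm]
  have hpx := pinsker_stdSimplex hx hz fun i h ↦ (hsupp i h).1
  have hpy := pinsker_stdSimplex hy hz fun i h ↦ (hsupp i h).2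
  rw [hdist_x] at hpx
  rw [hdist_y] at hpy
  linear_combination -hgap + l / 2 * hpx + (1 - l) / 2 * hpy

end RelEntropy

theorem kl_divergence_strongly_convex_l1_general
    (m : ℕ) (μ0 : Fin m → ℝ)
    (hμ0pos : ∀ j, 0 < μ0 j)
    (ψ : (Fin m → ℝ) → ℝ)
    (hψ : ∀ x, ψ x = ∑ j, x j * Real.log (x j / μ0 j)) :
    ∀ x ∈ stdSimplex ℝ (Fin m), ∀ y ∈ stdSimplex ℝ (Fin m),
      ∀ l : ℝ, 0 ≤ l → l ≤ 1 →
        ψ (fun j => l * x j + (1 - l) * y j) ≤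
          l * ψ x + (1 - l) * ψ y -
            (1 / 2) * l * (1 - l) * (∑ j, |x j - y j|) ^ 2 := by
  obtain rfl : ψ = fun x ↦ relEntropy x μ0 := funext hψ
  intro x hx y hy l hl0 hl1
  exact relEntropy_mixture_le (fun j ↦ (hμ0pos j).ne') hx hy hl0 hl1

/-- The Kullback–Leibler divergence `ψ(x) = ∑ j, x j * log (x j / μ₀ j)`
from a strictly positive prior `μ₀` is 1-strongly convex with respect to the `ℓ₁`-norm on
the probability simplex: for all `x, y ∈ Δ_m` and `λ ∈ [0,1]`,
`ψ(λx + (1-λ)y) ≤ λ ψ(x) + (1-λ) ψ(y) - (1/2) λ (1-λ) ‖x - y‖₁²`. -/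
theorem kl_divergence_strongly_convex_l1
    (m : ℕ) (hm : 1 ≤ m) (μ0 : Fin m → ℝ)
    (hμ0 : μ0 ∈ stdSimplex ℝ (Fin m)) (hμ0pos : ∀ j, 0 < μ0 j)
    (ψ : (Fin m → ℝ) → ℝ)
    (hψ : ∀ x, ψ x = ∑ j, x j * Real.log (x j / μ0 j)) :
    ∀ x ∈ stdSimplex ℝ (Fin m), ∀ y ∈ stdSimplex ℝ (Fin m),
      ∀ l : ℝ, 0 ≤ l → l ≤ 1 →
        ψ (fun j => l * x j + (1 - l) * y j) ≤
          l * ψ x + (1 - l) * ψ y -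
            (1 / 2) * l * (1 - l) * (∑ j, |x j - y j|) ^ 2 :=
  kl_divergence_strongly_convex_l1_general m μ0 hμ0pos ψ hψ
end
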